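/- arXiv:1901.01075 — 3 statements merged into one kernel-verified Lean document; each statement's English description precedes it below -/
import Mathlib

section
/- Let K be a non-archimedean valued field, and let P, Q ∈ K[X,Y] be homogeneous polynomials of degree d with resultant Res(P,Q) ≠ 0. Then there exist constants C₁, C₂ > 0 such that for all (x,y) ∈ K², C₁·max(|x|,|y|)^d ≤ max(|P(x,y)|, |Q(x,y)|) ≤ C₂·max(|x|,|y|)^d. Explicitly, one may take C₂ equal to the maximum of the absolute values of the coefficients of P and Q. -/
/-- The Sylvester determinant (resultant) of the pair of degree-`d` binary forms
with coefficient sequences `p`, `q` (`p i` being the coefficient of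
`x^i y^(d-i)`), given as the determinant of the `2d × 2d` Sylvester matrix. -/
noncomputable def sylvesterDet {K : Type*} [Field K] (d : ℕ) (p q : ℕ → K) : K :=
  Matrix.det (Matrix.of fun i j : Fin (2 * d) =>
    if (i : ℕ) < d then
      (if (i : ℕ) ≤ (j : ℕ) ∧ (j : ℕ) ≤ (i : ℕ) + d then p ((j : ℕ) - (i : ℕ)) else 0)
    else
      (if (i : ℕ) - d ≤ (j : ℕ) ∧ (j : ℕ) ≤ (i : ℕ) then q ((j : ℕ) - ((i : ℕ) - d)) else 0))

/-!
The upper bound is the ultrametric inequality applied term by term to `P` and `Q`. For the lower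
bound, the Sylvester matrix `S` maps the vector of monomials `x ^ j * y ^ (2d - 1 - j)` to the
vector of products `x ^ a * y ^ (d - 1 - a) * P(x, y)` and `x ^ a * y ^ (d - 1 - a) * Q(x, y)`.
Since `det S = Res(P, Q) ≠ 0`, `S` is invertible, so `max(|x|, |y|) ^ (2d - 1)`, the sup norm of
the first vector, is at most `‖S⁻¹‖` times the sup norm of the second, which is at most
`max(|x|, |y|) ^ (d - 1) * max(|P(x, y)|, |Q(x, y)|)`.
-/

open Finset Matrix

section Forms

variable {K : Type*}

def binaryForm [CommSemiring K] (d : ℕ) (c : ℕ → K) (x y : K) : K :=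
  ∑ i ∈ range (d + 1), c i * x ^ i * y ^ (d - i)

def sylvesterMatrix [Zero K] (d : ℕ) (p q : ℕ → K) : Matrix (Fin (2 * d)) (Fin (2 * d)) K :=
  Matrix.of fun i j : Fin (2 * d) =>
    if (i : ℕ) < d then
      (if (i : ℕ) ≤ (j : ℕ) ∧ (j : ℕ) ≤ (i : ℕ) + d then p ((j : ℕ) - (i : ℕ)) else 0)
    else
      (if (i : ℕ) - d ≤ (j : ℕ) ∧ (j : ℕ) ≤ (i : ℕ) then q ((j : ℕ) - ((i : ℕ) - d)) else 0)

theorem sylvesterDet_eq_det [Field K] (d : ℕ) (p q : ℕ → K) :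
    sylvesterDet d p q = (sylvesterMatrix d p q).det := rfl

def monomialVector [CommSemiring K] (d : ℕ) (x y : K) : Fin (2 * d) → K :=
  fun j => x ^ (j : ℕ) * y ^ (2 * d - 1 - j)

/-- A row of the Sylvester matrix, paired with the monomials of degree `2d - 1`. -/
theorem sum_shifted_coeff_mul_monomialVector [CommSemiring K] {d a b : ℕ} (ha : a < d)
    (hb : b = a + d) (c : ℕ → K) (x y : K) :
    ∑ j : Fin (2 * d), (if a ≤ (j : ℕ) ∧ (j : ℕ) ≤ b then c (j - a) else 0) *
        monomialVector d x y j =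
      x ^ a * y ^ (d - 1 - a) * binaryForm d c x y := by
  subst hb
  simp only [monomialVector, ite_mul, zero_mul]
  rw [Fin.sum_univ_eq_sum_range (fun j => if a ≤ j ∧ j ≤ a + d then
      c (j - a) * (x ^ j * y ^ (2 * d - 1 - j)) else 0), ← sum_filter]
  have hwindow : (range (2 * d)).filter (fun j => a ≤ j ∧ j ≤ a + d) = Ico a (a + (d + 1)) := by
    ext j
    simp only [mem_filter, mem_range, mem_Ico]
    omega
  rw [hwindow, sum_Ico_eq_sum_range, Nat.add_sub_cancel_left, binaryForm, mul_sum]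
  refine sum_congr rfl fun k hk => ?_
  have hk : k ≤ d := Nat.lt_succ_iff.mp (mem_range.mp hk)
  rw [Nat.add_sub_cancel_left, pow_add,
    show 2 * d - 1 - (a + k) = (d - 1 - a) + (d - k) by omega, pow_add]
  ring

theorem sylvesterMatrix_mulVec_monomialVector [CommSemiring K] (d : ℕ) (p q : ℕ → K)
    (x y : K) (i : Fin (2 * d)) :
    (sylvesterMatrix d p q *ᵥ monomialVector d x y) i =
      if (i : ℕ) < d then x ^ (i : ℕ) * y ^ (d - 1 - i) * binaryForm d p x y
      else x ^ ((i : ℕ) - d) * y ^ (d - 1 - (i - d)) * binaryForm d q x y := by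
  simp only [mulVec, dotProduct, sylvesterMatrix, of_apply]
  split_ifs with hi
  · exact sum_shifted_coeff_mul_monomialVector hi rfl p x y
  · exact sum_shifted_coeff_mul_monomialVector (by omega) (by omega) q x y

end Forms

section Norms

variable {K : Type*} [NormedField K]

theorem norm_pow_mul_pow_le_max_pow (x y : K) {a b n : ℕ} (hn : a + b = n) :
    ‖x ^ a * y ^ b‖ ≤ max ‖x‖ ‖y‖ ^ n := by
  rw [norm_mul, norm_pow, norm_pow, ← hn, pow_add]
  gcongr
  exacts [le_max_left _ _, le_max_right _ _]

theorem norm_binaryForm_le [IsUltrametricDist K] {d : ℕ} {c : ℕ → K} {C : ℝ}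
    (hc : ∀ i ∈ range (d + 1), ‖c i‖ ≤ C) (x y : K) :
    ‖binaryForm d c x y‖ ≤ C * max ‖x‖ ‖y‖ ^ d := by
  refine IsUltrametricDist.norm_sum_le_of_forall_le_of_nonempty nonempty_range_add_one
    fun i hi => ?_
  have hid : i + (d - i) = d := Nat.add_sub_cancel' (Nat.lt_succ_iff.mp (mem_range.mp hi))
  rw [mul_assoc, norm_mul]
  exact mul_le_mul (hc i hi) (norm_pow_mul_pow_le_max_pow x y hid) (norm_nonneg _)
    ((norm_nonneg _).trans (hc i hi))

theorem norm_sylvesterMatrix_mulVec_monomialVector_le (d : ℕ) (p q : ℕ → K) (x y : K) :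
    ‖sylvesterMatrix d p q *ᵥ monomialVector d x y‖ ≤
      max ‖x‖ ‖y‖ ^ (d - 1) * max ‖binaryForm d p x y‖ ‖binaryForm d q x y‖ := by
  have hmono : ∀ a ≤ d - 1, ‖x ^ a * y ^ (d - 1 - a)‖ ≤ max ‖x‖ ‖y‖ ^ (d - 1) := fun a ha =>
    norm_pow_mul_pow_le_max_pow x y (Nat.add_sub_cancel' ha)
  refine pi_norm_le_iff_of_nonneg (by positivity) |>.mpr fun i => ?_
  rw [sylvesterMatrix_mulVec_monomialVector]
  split_ifs with hi <;> rw [norm_mul]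
  · exact mul_le_mul (hmono i (by omega)) (le_max_left _ _) (norm_nonneg _) (by positivity)
  · exact mul_le_mul (hmono (i - d) (by omega)) (le_max_right _ _) (norm_nonneg _)
      (by positivity)

theorem max_pow_le_norm_monomialVector {d : ℕ} (hd : 1 ≤ d) (x y : K) :
    max ‖x‖ ‖y‖ ^ (2 * d - 1) ≤ ‖monomialVector d x y‖ := by
  rcases le_total ‖y‖ ‖x‖ with hyx | hxy
  · have := norm_le_pi_norm (monomialVector d x y) ⟨2 * d - 1, by omega⟩
    simpa [monomialVector, max_eq_left hyx] using this
  · have := norm_le_pi_norm (monomialVector d x y) ⟨0, by omega⟩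
    simpa [monomialVector, max_eq_right hxy] using this

open scoped Matrix.Norms.Operator in
theorem exists_pos_norm_le_mul_norm_mulVec {n : Type*} [Fintype n] [DecidableEq n]
    (A : Matrix n n K) (hA : IsUnit A.det) :
    ∃ B > (0 : ℝ), ∀ v : n → K, ‖v‖ ≤ B * ‖A *ᵥ v‖ := by
  refine ⟨‖A⁻¹‖ + 1, by positivity, fun v => ?_⟩
  calc ‖v‖ = ‖A⁻¹ *ᵥ (A *ᵥ v)‖ := by rw [mulVec_mulVec, nonsing_inv_mul A hA, one_mulVec]
    _ ≤ ‖A⁻¹‖ * ‖A *ᵥ v‖ := linfty_opNorm_mulVec _ _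
    _ ≤ (‖A⁻¹‖ + 1) * ‖A *ᵥ v‖ := by gcongr; linarith

theorem exists_pos_max_pow_le_mul_max_norm_binaryForm {d : ℕ} (hd : 1 ≤ d) {p q : ℕ → K}
    (hres : sylvesterDet d p q ≠ 0) :
    ∃ B > (0 : ℝ), ∀ x y : K,
      max ‖x‖ ‖y‖ ^ d ≤ B * max ‖binaryForm d p x y‖ ‖binaryForm d q x y‖ := by
  obtain ⟨B, hB, hinv⟩ := exists_pos_norm_le_mul_norm_mulVec (sylvesterMatrix d p q)
    (isUnit_iff_ne_zero.mpr (sylvesterDet_eq_det d p q ▸ hres))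
  refine ⟨B, hB, fun x y => ?_⟩
  set m := max ‖x‖ ‖y‖
  set W := max ‖binaryForm d p x y‖ ‖binaryForm d q x y‖
  have hm0 : 0 ≤ m := (norm_nonneg x).trans (le_max_left _ _)
  rcases hm0.eq_or_lt with hm | hm
  · rw [← hm, zero_pow (by omega)]
    exact mul_nonneg hB.le ((norm_nonneg _).trans (le_max_left _ _))
  have hchain : m ^ d * m ^ (d - 1) ≤ B * W * m ^ (d - 1) := calc
    m ^ d * m ^ (d - 1) = m ^ (2 * d - 1) := by rw [← pow_add]; congr 1; omega
    _ ≤ ‖monomialVector d x y‖ := max_pow_le_norm_monomialVector hd x y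
    _ ≤ B * ‖sylvesterMatrix d p q *ᵥ monomialVector d x y‖ := hinv _
    _ ≤ B * (m ^ (d - 1) * W) := by
        gcongr; exact norm_sylvesterMatrix_mulVec_monomialVector_le d p q x y
    _ = B * W * m ^ (d - 1) := by ring
  exact le_of_mul_le_mul_right hchain (pow_pos hm _)

end Norms

/-- if `P, Q` are homogeneous binary forms of degree `d` with
nonzero resultant, there are `C₁, C₂ > 0` with
`C₁ ‖(x,y)‖^d ≤ max(‖P(x,y)‖, ‖Q(x,y)‖) ≤ C₂ ‖(x,y)‖^d`, where
`‖(x,y)‖ = max(‖x‖,‖y‖)`, and one may take `C₂` to be the maximum of the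
absolute values of the coefficients of `P` and `Q`. -/
theorem stmt8 {K : Type*} [NormedField K] [IsUltrametricDist K]
    (d : ℕ) (hd : 1 ≤ d) (p q : ℕ → K) (hres : sylvesterDet d p q ≠ 0)
    (P Q : K → K → K)
    (hP : ∀ x y, P x y = ∑ i ∈ Finset.range (d + 1), p i * x ^ i * y ^ (d - i))
    (hQ : ∀ x y, Q x y = ∑ i ∈ Finset.range (d + 1), q i * x ^ i * y ^ (d - i)) :
    ∃ C₁ > (0 : ℝ), ∀ x y : K,
      C₁ * max ‖x‖ ‖y‖ ^ d ≤ max ‖P x y‖ ‖Q x y‖ ∧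
      max ‖P x y‖ ‖Q x y‖ ≤
        ((Finset.range (d + 1)).sup' Finset.nonempty_range_add_one
          fun i => max ‖p i‖ ‖q i‖) * max ‖x‖ ‖y‖ ^ d := by
  obtain ⟨B, hB, hlower⟩ := exists_pos_max_pow_le_mul_max_norm_binaryForm hd hres
  have hcoeff : ∀ i ∈ range (d + 1), max ‖p i‖ ‖q i‖ ≤
      (range (d + 1)).sup' nonempty_range_add_one fun i => max ‖p i‖ ‖q i‖ :=
    fun i hi => le_sup' (fun i => max ‖p i‖ ‖q i‖) hi
  refine ⟨B⁻¹, inv_pos.mpr hB, fun x y => ⟨?_, ?_⟩⟩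
  · rw [hP, hQ, inv_mul_le_iff₀ hB]
    exact hlower x y
  · rw [hP, hQ]
    exact max_le (norm_binaryForm_le (fun i hi => (le_max_left _ _).trans (hcoeff i hi)) x y)
      (norm_binaryForm_le (fun i hi => (le_max_right _ _).trans (hcoeff i hi)) x y)
end

section
/- Let K be a non-archimedean valued field, let P, Q ∈ K[X,Y] be homogeneous of degree d ≥ 2 with Res(P,Q) ≠ 0, and define F = (P,Q): K² → K² and its iterates F^n. Then for every (x,y) ∈ K² with (x,y) ≠ (0,0), the limit h(x,y) = lim_{n→∞} d^{-n} log max(|P^{(n)}(x,y)|, |Q^{(n)}(x,y)|) exists, where (P^{(n)}, Q^{(n)}) = F^n. -/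
open Filter

section Aux

variable {K : Type*} [NormedField K]

/-- Monomial norm bound. -/
lemma aux_mono_bound (x y : K) (a b : ℕ) :
    ‖x‖ ^ a * ‖y‖ ^ b ≤ (max ‖x‖ ‖y‖) ^ (a + b) := by
  rw [pow_add]
  exact mul_le_mul (pow_le_pow_left₀ (norm_nonneg x) (le_max_left _ _) a)
    (pow_le_pow_left₀ (norm_nonneg y) (le_max_right _ _) b) (by positivity) (by positivity)

/-- Upper bound on a binary form. -/
lemma aux_upper (d : ℕ) (c : ℕ → K) (x y : K) :
    ‖∑ i ∈ Finset.range (d + 1), c i * x ^ i * y ^ (d - i)‖ ≤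
      (∑ i ∈ Finset.range (d + 1), ‖c i‖) * (max ‖x‖ ‖y‖) ^ d := by
  calc ‖∑ i ∈ Finset.range (d + 1), c i * x ^ i * y ^ (d - i)‖
      ≤ ∑ i ∈ Finset.range (d + 1), ‖c i * x ^ i * y ^ (d - i)‖ := norm_sum_le _ _
    _ ≤ ∑ i ∈ Finset.range (d + 1), ‖c i‖ * (max ‖x‖ ‖y‖) ^ d := by
        apply Finset.sum_le_sum
        intro i hi
        rw [norm_mul, norm_mul, norm_pow, norm_pow, mul_assoc]
        refine mul_le_mul_of_nonneg_left ?_ (norm_nonneg _)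
        have h1 : i + (d - i) = d := by
          simp only [Finset.mem_range] at hi; omega
        calc ‖x‖ ^ i * ‖y‖ ^ (d - i) ≤ (max ‖x‖ ‖y‖) ^ (i + (d - i)) :=
              aux_mono_bound x y i (d - i)
          _ = (max ‖x‖ ‖y‖) ^ d := by rw [h1]
    _ = (∑ i ∈ Finset.range (d + 1), ‖c i‖) * (max ‖x‖ ‖y‖) ^ d := by
        rw [← Finset.sum_mul]

end Aux

section Syl

variable {K : Type*} [Field K]

/-- The Sylvester matrix. -/
noncomputable def sylMat (d : ℕ) (p q : ℕ → K) : Matrix (Fin (2 * d)) (Fin (2 * d)) K :=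
  Matrix.of fun i j : Fin (2 * d) =>
    if (i : ℕ) < d then
      (if (i : ℕ) ≤ (j : ℕ) ∧ (j : ℕ) ≤ (i : ℕ) + d then p ((j : ℕ) - (i : ℕ)) else 0)
    else
      (if (i : ℕ) - d ≤ (j : ℕ) ∧ (j : ℕ) ≤ (i : ℕ) then q ((j : ℕ) - ((i : ℕ) - d)) else 0)

lemma sylMat_det (d : ℕ) (p q : ℕ → K) : (sylMat d p q).det = sylvesterDet d p q := rfl

/-- The vector of monomials. -/
noncomputable def monVec (d : ℕ) (x y : K) : Fin (2 * d) → K :=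
  fun j => x ^ (j : ℕ) * y ^ (2 * d - 1 - (j : ℕ))

lemma sylMat_mulVec (d : ℕ) (p q : ℕ → K) (x y : K) (k : Fin (2 * d)) :
    Matrix.mulVec (sylMat d p q) (monVec d x y) k =
      if (k : ℕ) < d then
        x ^ (k : ℕ) * y ^ (d - 1 - (k : ℕ)) *
          ∑ i ∈ Finset.range (d + 1), p i * x ^ i * y ^ (d - i)
      else
        x ^ ((k : ℕ) - d) * y ^ (2 * d - 1 - (k : ℕ)) *
          ∑ i ∈ Finset.range (d + 1), q i * x ^ i * y ^ (d - i) := by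
  have hk2 : (k : ℕ) < 2 * d := k.isLt
  set f : ℕ → K := fun n =>
    (if (k : ℕ) < d then (if (k : ℕ) ≤ n ∧ n ≤ (k : ℕ) + d then p (n - (k : ℕ)) else 0)
     else (if (k : ℕ) - d ≤ n ∧ n ≤ (k : ℕ) then q (n - ((k : ℕ) - d)) else 0)) *
      (x ^ n * y ^ (2 * d - 1 - n)) with hfdef
  have key : Matrix.mulVec (sylMat d p q) (monVec d x y) k = ∑ n ∈ Finset.range (2 * d), f n := by
    rw [Matrix.mulVec, dotProduct]
    exact Fin.sum_univ_eq_sum_range f (2 * d)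
  rw [key]
  rcases lt_or_ge (k : ℕ) d with h | h
  · rw [if_pos h]
    have e1 : ∑ n ∈ Finset.range (2 * d), f n =
        ∑ n ∈ Finset.Ico (k : ℕ) ((k : ℕ) + d + 1), f n := by
      refine (Finset.sum_subset ?_ ?_).symm
      · intro n hn
        simp only [Finset.mem_Ico, Finset.mem_range] at *
        omega
      · intro n hn hnot
        simp only [Finset.mem_Ico, Finset.mem_range, not_and, not_lt] at hn hnot
        simp only [hfdef, if_pos h]
        rw [if_neg (by omega), zero_mul]
    rw [e1, Finset.sum_Ico_eq_sum_range,
      show (k : ℕ) + d + 1 - (k : ℕ) = d + 1 by omega, Finset.mul_sum]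
    refine Finset.sum_congr rfl ?_
    intro i hi
    simp only [Finset.mem_range] at hi
    simp only [hfdef, if_pos h]
    rw [if_pos (by omega), show (k : ℕ) + i - (k : ℕ) = i by omega,
      show 2 * d - 1 - ((k : ℕ) + i) = (d - 1 - (k : ℕ)) + (d - i) by omega,
      pow_add, pow_add]
    ring
  · rw [if_neg (not_lt.2 h)]
    have e1 : ∑ n ∈ Finset.range (2 * d), f n =
        ∑ n ∈ Finset.Ico ((k : ℕ) - d) ((k : ℕ) + 1), f n := by
      refine (Finset.sum_subset ?_ ?_).symm
      · intro n hn
        simp only [Finset.mem_Ico, Finset.mem_range] at *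
        omega
      · intro n hn hnot
        simp only [Finset.mem_Ico, Finset.mem_range, not_and, not_lt] at hn hnot
        simp only [hfdef, if_neg (not_lt.2 h)]
        rw [if_neg (by omega), zero_mul]
    rw [e1, Finset.sum_Ico_eq_sum_range,
      show (k : ℕ) + 1 - ((k : ℕ) - d) = d + 1 by omega, Finset.mul_sum]
    refine Finset.sum_congr rfl ?_
    intro i hi
    simp only [Finset.mem_range] at hi
    simp only [hfdef, if_neg (not_lt.2 h)]
    rw [if_pos (by omega), show (k : ℕ) - d + i - ((k : ℕ) - d) = i by omega,
      show 2 * d - 1 - ((k : ℕ) - d + i) = (2 * d - 1 - (k : ℕ)) + (d - i) by omega,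
      pow_add, pow_add]
    ring

/-- Cramer identity: `det S • monVec = adjugate S *ᵥ (S *ᵥ monVec)`. -/
lemma syl_cramer (d : ℕ) (p q : ℕ → K) (x y : K) (j : Fin (2 * d)) :
    sylvesterDet d p q * monVec d x y j =
      ∑ k : Fin (2 * d), (sylMat d p q).adjugate j k *
        Matrix.mulVec (sylMat d p q) (monVec d x y) k := by
  have h1 : Matrix.mulVec ((sylMat d p q).adjugate * sylMat d p q) (monVec d x y) =
      Matrix.mulVec ((sylMat d p q).det • (1 : Matrix (Fin (2 * d)) (Fin (2 * d)) K))
        (monVec d x y) := by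
    rw [Matrix.adjugate_mul]
  rw [Matrix.smul_mulVec, Matrix.one_mulVec, ← Matrix.mulVec_mulVec] at h1
  have h2 := congrFun h1 j
  rw [Matrix.mulVec, dotProduct] at h2
  have h3 : sylvesterDet d p q * monVec d x y j =
      ((sylMat d p q).det • monVec d x y) j := by
    rw [Pi.smul_apply, smul_eq_mul, sylMat_det]
  rw [h3, ← h2]

end Syl

section Lower

variable {K : Type*} [NormedField K]

/-- Each entry of `S *ᵥ monVec` is bounded by `M^(d-1) * max(‖P‖,‖Q‖)`. -/
lemma aux_entry_bound (d : ℕ) (hd : 1 ≤ d) (p q : ℕ → K) (x y : K) (k : Fin (2 * d)) :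
    ‖Matrix.mulVec (sylMat d p q) (monVec d x y) k‖ ≤
      (max ‖x‖ ‖y‖) ^ (d - 1) *
        max ‖∑ i ∈ Finset.range (d + 1), p i * x ^ i * y ^ (d - i)‖
            ‖∑ i ∈ Finset.range (d + 1), q i * x ^ i * y ^ (d - i)‖ := by
  have hk2 : (k : ℕ) < 2 * d := k.isLt
  rw [sylMat_mulVec]
  split_ifs with h
  · rw [norm_mul, norm_mul, norm_pow, norm_pow]
    refine mul_le_mul ?_ (le_max_left _ _) (norm_nonneg _) (by positivity)
    calc ‖x‖ ^ (k : ℕ) * ‖y‖ ^ (d - 1 - (k : ℕ))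
        ≤ (max ‖x‖ ‖y‖) ^ ((k : ℕ) + (d - 1 - (k : ℕ))) := aux_mono_bound x y _ _
      _ = (max ‖x‖ ‖y‖) ^ (d - 1) := by congr 1; omega
  · rw [norm_mul, norm_mul, norm_pow, norm_pow]
    refine mul_le_mul ?_ (le_max_right _ _) (norm_nonneg _) (by positivity)
    calc ‖x‖ ^ ((k : ℕ) - d) * ‖y‖ ^ (2 * d - 1 - (k : ℕ))
        ≤ (max ‖x‖ ‖y‖) ^ (((k : ℕ) - d) + (2 * d - 1 - (k : ℕ))) := aux_mono_bound x y _ _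
      _ = (max ‖x‖ ‖y‖) ^ (d - 1) := by congr 1; omega

/-- Lower bound from the resultant. -/
lemma aux_lower (d : ℕ) (hd : 1 ≤ d) (p q : ℕ → K) :
    ∃ C₃ : ℝ, 0 < C₃ ∧ ∀ x y : K,
      ‖sylvesterDet d p q‖ * (max ‖x‖ ‖y‖) ^ (2 * d - 1) ≤
        C₃ * ((max ‖x‖ ‖y‖) ^ (d - 1) *
          max ‖∑ i ∈ Finset.range (d + 1), p i * x ^ i * y ^ (d - i)‖
              ‖∑ i ∈ Finset.range (d + 1), q i * x ^ i * y ^ (d - i)‖) := by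
  have h2d : 0 < 2 * d := by omega
  set j0 : Fin (2 * d) := ⟨0, h2d⟩ with hj0
  set j1 : Fin (2 * d) := ⟨2 * d - 1, by omega⟩ with hj1
  set A := (sylMat d p q).adjugate with hA
  refine ⟨(∑ k : Fin (2 * d), ‖A j0 k‖) + (∑ k : Fin (2 * d), ‖A j1 k‖) + 1,
    by positivity, ?_⟩
  intro x y
  set B := (max ‖x‖ ‖y‖) ^ (d - 1) *
    max ‖∑ i ∈ Finset.range (d + 1), p i * x ^ i * y ^ (d - i)‖
        ‖∑ i ∈ Finset.range (d + 1), q i * x ^ i * y ^ (d - i)‖ with hB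
  have hBnn : 0 ≤ B := by positivity
  have hbd : ∀ j : Fin (2 * d),
      ‖sylvesterDet d p q * monVec d x y j‖ ≤ (∑ k : Fin (2 * d), ‖A j k‖) * B := by
    intro j
    rw [syl_cramer d p q x y j]
    calc ‖∑ k : Fin (2 * d), A j k * Matrix.mulVec (sylMat d p q) (monVec d x y) k‖
        ≤ ∑ k : Fin (2 * d), ‖A j k * Matrix.mulVec (sylMat d p q) (monVec d x y) k‖ :=
          norm_sum_le _ _
      _ ≤ ∑ k : Fin (2 * d), ‖A j k‖ * B := by
          refine Finset.sum_le_sum fun k _ => ?_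
          rw [norm_mul]
          exact mul_le_mul_of_nonneg_left (aux_entry_bound d hd p q x y k) (norm_nonneg _)
      _ = (∑ k : Fin (2 * d), ‖A j k‖) * B := by rw [← Finset.sum_mul]
  have hm0 : ‖monVec d x y j0‖ = ‖y‖ ^ (2 * d - 1) := by
    simp [monVec, hj0]
  have hm1 : ‖monVec d x y j1‖ = ‖x‖ ^ (2 * d - 1) := by
    have : 2 * d - 1 - (2 * d - 1) = 0 := by omega
    simp [monVec, hj1, this]
  have hnn0 : 0 ≤ ∑ k : Fin (2 * d), ‖A j0 k‖ := Finset.sum_nonneg fun k _ => norm_nonneg _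
  have hnn1 : 0 ≤ ∑ k : Fin (2 * d), ‖A j1 k‖ := Finset.sum_nonneg fun k _ => norm_nonneg _
  rcases le_total ‖x‖ ‖y‖ with hxy | hxy
  · have hmax : max ‖x‖ ‖y‖ = ‖y‖ := max_eq_right hxy
    have := hbd j0
    rw [norm_mul, hm0] at this
    rw [hmax]
    nlinarith [this, hBnn, hnn1]
  · have hmax : max ‖x‖ ‖y‖ = ‖x‖ := max_eq_left hxy
    have := hbd j1
    rw [norm_mul, hm1] at this
    rw [hmax]
    nlinarith [this, hBnn, hnn0]

end Lower

/-- for `F = (P,Q)` with `P, Q` homogeneous of degree `d ≥ 2` and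
nonzero resultant, the homogeneous escape rate
`lim_n d^{-n} log max(‖P^{(n)}(x,y)‖, ‖Q^{(n)}(x,y)‖)` exists for every
`(x,y) ≠ (0,0)`. -/
theorem stmt9 {K : Type*} [NormedField K] [IsUltrametricDist K]
    (d : ℕ) (hd : 2 ≤ d) (p q : ℕ → K) (hres : sylvesterDet d p q ≠ 0)
    (P Q : K → K → K)
    (hP : ∀ x y, P x y = ∑ i ∈ Finset.range (d + 1), p i * x ^ i * y ^ (d - i))
    (hQ : ∀ x y, Q x y = ∑ i ∈ Finset.range (d + 1), q i * x ^ i * y ^ (d - i))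
    (F : K × K → K × K) (hF : ∀ v : K × K, F v = (P v.1 v.2, Q v.1 v.2)) :
    ∀ v : K × K, v ≠ 0 →
      ∃ L : ℝ, Tendsto
        (fun n : ℕ => (1 / (d : ℝ) ^ n) * Real.log (max ‖(F^[n] v).1‖ ‖(F^[n] v).2‖))
        atTop (nhds L) := by
  intro v hv
  have hd1 : 1 ≤ d := by omega
  obtain ⟨C₃, hC₃, hlow⟩ := aux_lower d hd1 p q
  set C₁ : ℝ := ‖sylvesterDet d p q‖ / C₃ with hC₁def
  have hC₁ : 0 < C₁ := div_pos (norm_pos_iff.2 hres) hC₃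
  set C₂ : ℝ := (∑ i ∈ Finset.range (d + 1), ‖p i‖) + (∑ i ∈ Finset.range (d + 1), ‖q i‖) + 1
    with hC₂def
  have hC₂ : 0 < C₂ := by positivity
  -- upper bound for one application of F
  have hub : ∀ w : K × K, max ‖(F w).1‖ ‖(F w).2‖ ≤ C₂ * (max ‖w.1‖ ‖w.2‖) ^ d := by
    intro w
    have hg : max ‖(F w).1‖ ‖(F w).2‖ = max ‖P w.1 w.2‖ ‖Q w.1 w.2‖ := by rw [hF w]
    rw [hg, hP, hQ]
    have h1 := aux_upper d p w.1 w.2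
    have h2 := aux_upper d q w.1 w.2
    have hMnn : (0:ℝ) ≤ (max ‖w.1‖ ‖w.2‖) ^ d := by positivity
    have hpn : (0:ℝ) ≤ ∑ i ∈ Finset.range (d + 1), ‖p i‖ :=
      Finset.sum_nonneg fun i _ => norm_nonneg _
    have hqn : (0:ℝ) ≤ ∑ i ∈ Finset.range (d + 1), ‖q i‖ :=
      Finset.sum_nonneg fun i _ => norm_nonneg _
    apply max_le
    · refine le_trans h1 (mul_le_mul_of_nonneg_right ?_ hMnn)
      rw [hC₂def]; linarith
    · refine le_trans h2 (mul_le_mul_of_nonneg_right ?_ hMnn)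
      rw [hC₂def]; linarith
  -- lower bound for one application of F
  have hlb : ∀ w : K × K, C₁ * (max ‖w.1‖ ‖w.2‖) ^ d ≤ max ‖(F w).1‖ ‖(F w).2‖ := by
    intro w
    have hg : max ‖(F w).1‖ ‖(F w).2‖ = max ‖P w.1 w.2‖ ‖Q w.1 w.2‖ := by rw [hF w]
    rw [hg, hP, hQ]
    rcases eq_or_lt_of_le (le_trans (norm_nonneg w.1) (le_max_left ‖w.1‖ ‖w.2‖)) with hM | hM
    · rw [← hM, zero_pow (by omega : d ≠ 0), mul_zero]
      positivity
    · have hkey := hlow w.1 w.2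
      rw [show 2 * d - 1 = (d - 1) + d by omega, pow_add] at hkey
      have hpow : (0:ℝ) < (max ‖w.1‖ ‖w.2‖) ^ (d - 1) := pow_pos hM _
      rw [hC₁def, div_mul_eq_mul_div, div_le_iff₀ hC₃]
      nlinarith [hkey, hpow]
  -- positivity along the orbit
  have hpos : ∀ n : ℕ, (0:ℝ) < max ‖(F^[n] v).1‖ ‖(F^[n] v).2‖ := by
    intro n
    induction n with
    | zero =>
      simp only [Function.iterate_zero, id_eq]
      have h1 : v.1 ≠ 0 ∨ v.2 ≠ 0 := by
        by_contra hc
        push_neg at hc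
        exact hv (Prod.ext hc.1 hc.2)
      rcases h1 with h1 | h1
      · exact lt_max_of_lt_left (norm_pos_iff.2 h1)
      · exact lt_max_of_lt_right (norm_pos_iff.2 h1)
    | succ n ih =>
      rw [Function.iterate_succ_apply']
      calc (0:ℝ) < C₁ * (max ‖(F^[n] v).1‖ ‖(F^[n] v).2‖) ^ d := by positivity
        _ ≤ max ‖(F (F^[n] v)).1‖ ‖(F (F^[n] v)).2‖ := hlb _
  -- the sequence
  set a : ℕ → ℝ := fun n : ℕ =>
      (1 / (d : ℝ) ^ n) * Real.log (max ‖(F^[n] v).1‖ ‖(F^[n] v).2‖) with ha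
  have hdR : (1:ℝ) < (d : ℝ) := by exact_mod_cast (by omega : 1 < d)
  have hdR0 : (0:ℝ) < (d : ℝ) := by linarith
  set Kc : ℝ := max |Real.log C₁| |Real.log C₂| with hKc
  have hKcnn : 0 ≤ Kc := le_trans (abs_nonneg _) (le_max_left _ _)
  have hdist : ∀ n : ℕ, dist (a n) (a (n + 1)) ≤ (Kc / (d : ℝ)) * (1 / (d : ℝ)) ^ n := by
    intro n
    have hNpos : (0:ℝ) < max ‖(F^[n] v).1‖ ‖(F^[n] v).2‖ := hpos n
    have hN1 : (F^[n+1] v) = F (F^[n] v) := Function.iterate_succ_apply' F n v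
    have hub' := hub (F^[n] v)
    have hlb' := hlb (F^[n] v)
    have hFpos : (0:ℝ) < max ‖(F (F^[n] v)).1‖ ‖(F (F^[n] v)).2‖ := by
      calc (0:ℝ) < C₁ * (max ‖(F^[n] v).1‖ ‖(F^[n] v).2‖) ^ d := by positivity
        _ ≤ _ := hlb'
    have hlogu : Real.log (max ‖(F (F^[n] v)).1‖ ‖(F (F^[n] v)).2‖) ≤
        Real.log C₂ + (d : ℝ) * Real.log (max ‖(F^[n] v).1‖ ‖(F^[n] v).2‖) := by
      have h1 := Real.log_le_log hFpos hub'
      rwa [Real.log_mul (ne_of_gt hC₂) (by positivity), Real.log_pow] at h1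
    have hlogl : Real.log C₁ + (d : ℝ) * Real.log (max ‖(F^[n] v).1‖ ‖(F^[n] v).2‖) ≤
        Real.log (max ‖(F (F^[n] v)).1‖ ‖(F (F^[n] v)).2‖) := by
      have h1 := Real.log_le_log (by positivity) hlb'
      rwa [Real.log_mul (ne_of_gt hC₁) (by positivity), Real.log_pow] at h1
    have heq : a (n + 1) - a n =
        (1 / (d : ℝ) ^ (n + 1)) * (Real.log (max ‖(F (F^[n] v)).1‖ ‖(F (F^[n] v)).2‖) -
          (d : ℝ) * Real.log (max ‖(F^[n] v).1‖ ‖(F^[n] v).2‖)) := by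
      rw [ha]
      simp only [hN1]
      rw [pow_succ]
      field_simp
    rw [Real.dist_eq, abs_sub_comm, heq, abs_mul,
      abs_of_pos (by positivity : (0:ℝ) < 1 / (d : ℝ) ^ (n + 1))]
    have habs : |Real.log (max ‖(F (F^[n] v)).1‖ ‖(F (F^[n] v)).2‖) -
        (d : ℝ) * Real.log (max ‖(F^[n] v).1‖ ‖(F^[n] v).2‖)| ≤ Kc := by
      rw [abs_le]
      constructor
      · have h2 : -Kc ≤ Real.log C₁ := by
          have h3 := le_max_left |Real.log C₁| |Real.log C₂|
          have h4 := neg_abs_le (Real.log C₁)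
          rw [hKc]; linarith
        linarith
      · have h2 : Real.log C₂ ≤ Kc := le_trans (le_abs_self _) (le_max_right _ _)
        linarith
    have hfin : (1 / (d : ℝ) ^ (n + 1)) * Kc = (Kc / (d : ℝ)) * (1 / (d : ℝ)) ^ n := by
      field_simp
      rw [one_div_pow, pow_succ, mul_one_div, mul_assoc,
        mul_div_cancel_left₀ _ (by positivity : ((d : ℝ) ^ n) ≠ 0)]
      ring
    calc (1 / (d : ℝ) ^ (n + 1)) * |Real.log (max ‖(F (F^[n] v)).1‖ ‖(F (F^[n] v)).2‖) -
          (d : ℝ) * Real.log (max ‖(F^[n] v).1‖ ‖(F^[n] v).2‖)|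
        ≤ (1 / (d : ℝ) ^ (n + 1)) * Kc :=
          mul_le_mul_of_nonneg_left habs (by positivity)
      _ = (Kc / (d : ℝ)) * (1 / (d : ℝ)) ^ n := hfin
  have hcauchy : CauchySeq a :=
    cauchySeq_of_le_geometric (1 / (d : ℝ)) (Kc / (d : ℝ))
      (by rw [div_lt_one hdR0]; linarith) hdist
  obtain ⟨L, hL⟩ := cauchySeq_tendsto_of_complete hcauchy
  exact ⟨L, hL⟩
end

section
/- Let K be a non-archimedean valued field and f a monic polynomial of degree d ≥ 2 over K. The escaping set { z ∈ K : |f^n(z)| → ∞ } is open in K, and for every z₀ in the escaping set there is r > 0 and N such that for all z with |z − z₀| < r, h_f(z) = d^{-N} log|f^N(z)|; in particular h_f is continuous on the escaping set. -/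
open Filter

section aux

variable {K : Type*} [NormedField K] [IsUltrametricDist K]

/-- Key step: if `‖z‖` exceeds `M := 1 + ∑ ‖a i‖` then `‖f z‖ = ‖z‖ ^ d`. -/
lemma stmt16_aux_step (d : ℕ) (hd : 2 ≤ d) (a : ℕ → K)
    (f : K → K) (hf : ∀ z, f z = z ^ d + ∑ i ∈ Finset.range d, a i * z ^ i)
    (z : K) (hz : 1 + ∑ i ∈ Finset.range d, ‖a i‖ < ‖z‖) :
    ‖f z‖ = ‖z‖ ^ d := by
  set M : ℝ := 1 + ∑ i ∈ Finset.range d, ‖a i‖ with hM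
  have hM1 : (1 : ℝ) ≤ M := by
    have : (0 : ℝ) ≤ ∑ i ∈ Finset.range d, ‖a i‖ :=
      Finset.sum_nonneg fun i _ => norm_nonneg _
    linarith
  have hz1 : (1 : ℝ) < ‖z‖ := lt_of_le_of_lt hM1 hz
  have hzpos : (0 : ℝ) < ‖z‖ := lt_trans zero_lt_one hz1
  have hd0 : d ≠ 0 := by omega
  have hsum : ‖∑ i ∈ Finset.range d, a i * z ^ i‖ < ‖z ^ d‖ := by
    have h1 : ‖∑ i ∈ Finset.range d, a i * z ^ i‖ ≤
        ∑ i ∈ Finset.range d, ‖a i‖ * ‖z‖ ^ (d - 1) := by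
      refine (norm_sum_le _ _).trans (Finset.sum_le_sum fun i hi => ?_)
      rw [norm_mul, norm_pow]
      refine mul_le_mul_of_nonneg_left ?_ (norm_nonneg _)
      exact pow_le_pow_right₀ hz1.le (by
        have := Finset.mem_range.mp hi; omega)
    have h2 : ∑ i ∈ Finset.range d, ‖a i‖ * ‖z‖ ^ (d - 1) <
        ‖z‖ * ‖z‖ ^ (d - 1) := by
      rw [← Finset.sum_mul]
      refine mul_lt_mul_of_pos_right ?_ (pow_pos hzpos _)
      linarith
    have h3 : ‖z‖ * ‖z‖ ^ (d - 1) = ‖z ^ d‖ := by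
      rw [norm_pow, ← pow_succ']
      congr 1
      omega
    linarith
  rw [hf]
  rw [IsUltrametricDist.norm_add_eq_max_of_norm_ne_norm (ne_of_gt hsum)]
  rw [max_eq_left hsum.le, norm_pow]

lemma stmt16_aux_iter (d : ℕ) (hd : 2 ≤ d) (a : ℕ → K)
    (f : K → K) (hf : ∀ z, f z = z ^ d + ∑ i ∈ Finset.range d, a i * z ^ i)
    (z : K) (hz : 1 + ∑ i ∈ Finset.range d, ‖a i‖ < ‖z‖) (n : ℕ) :
    1 + ∑ i ∈ Finset.range d, ‖a i‖ < ‖f^[n] z‖ ∧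
    ‖f^[n] z‖ = ‖z‖ ^ (d ^ n) := by
  set M : ℝ := 1 + ∑ i ∈ Finset.range d, ‖a i‖ with hM
  have hM1 : (1 : ℝ) ≤ M := by
    have : (0 : ℝ) ≤ ∑ i ∈ Finset.range d, ‖a i‖ :=
      Finset.sum_nonneg fun i _ => norm_nonneg _
    linarith
  induction n with
  | zero => simpa using hz
  | succ n ih =>
    obtain ⟨ih1, ih2⟩ := ih
    have h1 : (1 : ℝ) < ‖f^[n] z‖ := lt_of_le_of_lt hM1 ih1
    have heq : ‖f^[n+1] z‖ = ‖f^[n] z‖ ^ d := by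
      rw [Function.iterate_succ_apply']
      exact stmt16_aux_step d hd a f hf _ ih1
    constructor
    · calc M < ‖f^[n] z‖ := ih1
        _ ≤ ‖f^[n] z‖ ^ d := le_self_pow₀ h1.le (by omega)
        _ = ‖f^[n+1] z‖ := heq.symm
    · rw [heq, ih2, ← pow_mul, pow_succ]

end aux

/-- for a monic polynomial `f` of degree `d ≥ 2` over a
non-archimedean valued field, the escaping set is open, and near any escaping
parameter the escape-rate height is computed by a single finite formula
`h_f(z) = d^{-N} log ‖f^N(z)‖`; in particular `h_f` is continuous there. -/
theorem stmt16 {K : Type*} [NormedField K] [IsUltrametricDist K]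
    (d : ℕ) (hd : 2 ≤ d) (a : ℕ → K)
    (f : K → K) (hf : ∀ z, f z = z ^ d + ∑ i ∈ Finset.range d, a i * z ^ i) :
    IsOpen {z : K | Tendsto (fun n : ℕ => ‖f^[n] z‖) atTop atTop} ∧
    ∀ z₀ ∈ {z : K | Tendsto (fun n : ℕ => ‖f^[n] z‖) atTop atTop},
      ∃ r > (0 : ℝ), ∃ N : ℕ, ∀ z : K, ‖z - z₀‖ < r →
        Tendsto (fun n : ℕ => (1 / (d : ℝ) ^ n) * Real.log (max 1 ‖f^[n] z‖))
          atTop (nhds ((1 / (d : ℝ) ^ N) * Real.log ‖f^[N] z‖)) := by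
  set M : ℝ := 1 + ∑ i ∈ Finset.range d, ‖a i‖ with hM
  have hM1 : (1 : ℝ) ≤ M := by
    have : (0 : ℝ) ≤ ∑ i ∈ Finset.range d, ‖a i‖ :=
      Finset.sum_nonneg fun i _ => norm_nonneg _
    linarith
  have hcont : Continuous f := by
    have : f = fun z => z ^ d + ∑ i ∈ Finset.range d, a i * z ^ i :=
      funext hf
    rw [this]; continuity
  -- membership criterion
  have hescape : ∀ z : K, M < ‖z‖ →
      Tendsto (fun n : ℕ => ‖f^[n] z‖) atTop atTop := by
    intro z hz
    have hz1 : (1 : ℝ) < ‖z‖ := lt_of_le_of_lt hM1 hz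
    have key : ∀ n, ‖f^[n] z‖ = ‖z‖ ^ (d ^ n) := fun n =>
      (stmt16_aux_iter d hd a f hf z hz n).2
    rw [show (fun n : ℕ => ‖f^[n] z‖) = fun n => ‖z‖ ^ (d ^ n) from funext key]
    exact (tendsto_pow_atTop_atTop_of_one_lt hz1).comp
      (tendsto_pow_atTop_atTop_of_one_lt (by omega))
  -- local data at an escaping point
  have hlocal : ∀ z₀ : K, Tendsto (fun n : ℕ => ‖f^[n] z₀‖) atTop atTop →
      ∃ r > (0 : ℝ), ∃ N : ℕ, ∀ z : K, ‖z - z₀‖ < r → M < ‖f^[N] z‖ := by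
    intro z₀ h
    obtain ⟨N, hN⟩ := (h.eventually_gt_atTop M).exists
    have hcN : Continuous fun z : K => ‖f^[N] z‖ :=
      (hcont.iterate N).norm
    have := Metric.continuousAt_iff.mp (hcN.continuousAt (x := z₀))
      (‖f^[N] z₀‖ - M) (by linarith)
    obtain ⟨δ, hδ, hball⟩ := this
    refine ⟨δ, hδ, N, fun z hz => ?_⟩
    have : dist z z₀ < δ := by rwa [dist_eq_norm]
    have := hball this
    rw [Real.dist_eq] at this
    have := abs_lt.mp this
    linarith [this.1]
  constructor
  · rw [Metric.isOpen_iff]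
    intro z₀ hz₀
    obtain ⟨r, hr, N, hN⟩ := hlocal z₀ hz₀
    refine ⟨r, hr, fun z hz => ?_⟩
    rw [Metric.mem_ball, dist_eq_norm] at hz
    have hMN := hN z hz
    have := hescape _ hMN
    rw [Set.mem_setOf_eq, ← tendsto_add_atTop_iff_nat N]
    refine this.congr fun n => ?_
    rw [← Function.iterate_add_apply]
  · intro z₀ hz₀
    obtain ⟨r, hr, N, hN⟩ := hlocal z₀ hz₀
    refine ⟨r, hr, N, fun z hz => ?_⟩
    have hMN : M < ‖f^[N] z‖ := hN z hz
    have h1N : (1 : ℝ) < ‖f^[N] z‖ := lt_of_le_of_lt hM1 hMN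
    -- eventual constancy
    have hconst : ∀ k : ℕ,
        (1 / (d : ℝ) ^ (N + k)) * Real.log (max 1 ‖f^[N + k] z‖) =
        (1 / (d : ℝ) ^ N) * Real.log ‖f^[N] z‖ := by
      intro k
      have hiter := stmt16_aux_iter d hd a f hf (f^[N] z) hMN k
      have h1k : (1 : ℝ) < ‖f^[k] (f^[N] z)‖ := lt_of_le_of_lt hM1 hiter.1
      have hfk : f^[N + k] z = f^[k] (f^[N] z) := by
        rw [add_comm, Function.iterate_add_apply]
      rw [hfk, max_eq_right h1k.le, hiter.2, Real.log_pow]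
      have hdpos : (0 : ℝ) < (d : ℝ) := by positivity
      rw [pow_add]
      field_simp
      push_cast
      ring
    have : ∀ᶠ n : ℕ in atTop,
        (1 / (d : ℝ) ^ n) * Real.log (max 1 ‖f^[n] z‖) =
        (1 / (d : ℝ) ^ N) * Real.log ‖f^[N] z‖ := by
      filter_upwards [eventually_ge_atTop N] with n hn
      have : n = N + (n - N) := by omega
      rw [this]
      exact hconst _
    exact Tendsto.congr' (this.mono fun n h => h.symm) tendsto_const_nhds
end
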